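/- Let R ⊆ (𝕋ⁿ)² be a signed bend cone and define C = R ⊕ Δⁿ, i.e., the set of all pairs (x⁺ ⊕ c, x⁻ ⊕ c) with (x⁺,x⁻) ∈ R and c ∈ 𝕋ⁿ (⊕ denoting componentwise max). Then C is a monotone pre-congruence. -/

import Mathlib

/-- The tropical (max-plus) semiring 𝕋 = ℝ ∪ {−∞}, modeled as `WithBot ℝ`. -/
abbrev Trop : Type := WithBot ℝ

/-- The map 𝕋 → ℝ, x ↦ eˣ (with e^{−∞} = 0), inducing the metric
d(x,y) = |eˣ − e^y| on 𝕋. -/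
noncomputable def tropExp : Trop → ℝ := WithBot.recBotCoe (0 : ℝ) Real.exp

/-- The topology on 𝕋 induced by the metric d(x,y) = |eˣ − e^y|. -/
noncomputable instance : TopologicalSpace Trop :=
  TopologicalSpace.induced tropExp inferInstance

/-- A pair of vectors (x⁺, x⁻) ∈ (𝕋ⁿ)² is signed if, for every coordinate i,
x⁺_i = −∞ or x⁻_i = −∞. -/
def SignedVecPair {n : ℕ} (x : (Fin n → Trop) × (Fin n → Trop)) : Prop :=
  ∀ i, x.1 i = ⊥ ∨ x.2 i = ⊥

/-- Tropical scalar product of vectors: ⟨x,y⟩ = max_i (x_i + y_i). -/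
noncomputable def tdot {n : ℕ} (x y : Fin n → Trop) : Trop :=
  Finset.univ.sup fun i => x i + y i

/-- The "signed part" f^∨ of a pair of vectors f = (f⁺, f⁻):
f^{∨+}_i = f⁺_i if f⁺_i ≥ f⁻_i and −∞ otherwise;
f^{∨−}_i = f⁻_i if f⁻_i > f⁺_i and −∞ otherwise. -/
noncomputable def vee {n : ℕ} (f : (Fin n → Trop) × (Fin n → Trop)) :
    (Fin n → Trop) × (Fin n → Trop) :=
  (fun i => if f.2 i ≤ f.1 i then f.1 i else ⊥,
   fun i => if f.1 i < f.2 i then f.2 i else ⊥)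

/-- Tropical scalar action: (λ ⊙ f)_i = λ + f_i. -/
noncomputable def tsmul {n : ℕ} (l : Trop) (f : Fin n → Trop) : Fin n → Trop :=
  fun i => l + f i

/-- A monotone pre-congruence C ⊆ (𝕋ⁿ)²: stable by tropical scalar multiplication,
by componentwise max, by "transitivity" (f⁻ = g⁺ implies (f⁺,g⁻) ∈ C), and containing
every pair (f⁺,f⁻) with f⁺ ≥ f⁻. -/
structure IsMonotonePrecongruence {n : ℕ} (C : Set ((Fin n → Trop) × (Fin n → Trop))) : Prop where
  smul_mem : ∀ f ∈ C, ∀ l : Trop, (tsmul l f.1, tsmul l f.2) ∈ C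
  add_mem : ∀ f ∈ C, ∀ g ∈ C, (f.1 ⊔ g.1, f.2 ⊔ g.2) ∈ C
  trans_mem : ∀ f ∈ C, ∀ g ∈ C, f.2 = g.1 → (f.1, g.2) ∈ C
  monotone_mem : ∀ f : (Fin n → Trop) × (Fin n → Trop), f.2 ≤ f.1 → f ∈ C

/-- The pair x ⊕_i y = (x⁺ ⊕ y⁺_{∖i}, x⁻_{∖i} ⊕ y⁻), where z_{∖i} is z with
coordinate i replaced by −∞. -/
noncomputable def oplusI {n : ℕ} (i : Fin n)
    (x y : (Fin n → Trop) × (Fin n → Trop)) : (Fin n → Trop) × (Fin n → Trop) :=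
  (x.1 ⊔ Function.update y.1 i ⊥, Function.update x.2 i ⊥ ⊔ y.2)

/-- A signed bend cone R ⊆ (𝕋ⁿ)²: all elements are signed pairs, R contains all
pairs (x⁺, −∞), is stable by tropical scalar multiplication, and is stable under
the operations x, y ↦ (x ⊕ y)^∨ and x, y ↦ (x ⊕_i y)^∨ (the latter when x⁻_i = y⁺_i). -/
structure IsSignedBendCone {n : ℕ} (R : Set ((Fin n → Trop) × (Fin n → Trop))) : Prop where
  signed : ∀ x ∈ R, SignedVecPair x
  pos_mem : ∀ xp : Fin n → Trop, (xp, fun _ => (⊥ : Trop)) ∈ R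
  smul_mem : ∀ x ∈ R, ∀ l : Trop, (tsmul l x.1, tsmul l x.2) ∈ R
  add_vee_mem : ∀ x ∈ R, ∀ y ∈ R, vee (x.1 ⊔ y.1, x.2 ⊔ y.2) ∈ R
  addI_vee_mem : ∀ x ∈ R, ∀ y ∈ R, ∀ i : Fin n, x.2 i = y.1 i → vee (oplusI i x y) ∈ R

/-- The one-sided polar B^⊲ = {a ∈ 𝕋ⁿ : ⟨x⁺,a⟩ ≥ ⟨x⁻,a⟩ for all (x⁺,x⁻) ∈ B}. -/
def onePolar {n : ℕ} (B : Set ((Fin n → Trop) × (Fin n → Trop))) : Set (Fin n → Trop) :=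
  {a | ∀ x ∈ B, tdot x.2 a ≤ tdot x.1 a}

/-- The signed part C^∨ of a set C ⊆ (𝕋ⁿ)²: the signed pairs belonging to C. -/
def signedPart {n : ℕ} (C : Set ((Fin n → Trop) × (Fin n → Trop))) :
    Set ((Fin n → Trop) × (Fin n → Trop)) :=
  {x ∈ C | SignedVecPair x}

/-- The signed polar A° of A ⊆ 𝕋ⁿ : the set of signed pairs (x⁺,x⁻) with
⟨x⁺,a⟩ ≥ ⟨x⁻,a⟩ for all a ∈ A. -/
def signedPolar {n : ℕ} (A : Set (Fin n → Trop)) :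
    Set ((Fin n → Trop) × (Fin n → Trop)) :=
  {x | SignedVecPair x ∧ ∀ a ∈ A, tdot x.2 a ≤ tdot x.1 a}

/-!
A pair `f` lies in `R ⊕ Δⁿ` exactly when its signed part `f^∨` lies in `R`: indeed
`f = f^∨ ⊕ (f⁺ ∧ f⁻, f⁺ ∧ f⁻)`, and conversely `(x⁺ ⊕ c, x⁻ ⊕ c)^∨ = (x ⊕ (c, −∞))^∨`.
Scaling, maxima and the monotone axiom then reduce to identities for `∨`.

For transitivity, let `(P, M)^∨` and `(M, N)^∨` lie in `R`. It suffices to find, for every `i`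
with `P i < N i`, an element of `R` below `(P, N)` whose negative part is `N i` at `i`: if `w`
is the iterated `(· ⊕ ·)^∨` of these elements, then `((P, −∞) ⊕ w)^∨ = (P, N)^∨`.
If `N i ≤ M i`, rescale `(P, M)^∨` and delete all of its negative coordinates but the `i`-th.
Otherwise start from `(M, N)^∨` with negative part cut down to coordinate `i`; its positive
coordinates exceeding `P` are the `j` with `P j < M j` and `N j ≤ M j`, where they agree with
negative coordinates of `(P, M)^∨`, so the operations `⊕_j` cancel them one at a time.
-/

open Function

section Vee

variable {n : ℕ}

lemma vee_of_signedVecPair {f : (Fin n → Trop) × (Fin n → Trop)} (hf : SignedVecPair f) :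
    vee f = f := by
  ext i <;> rcases hf i with h | h <;> simp [vee, h]
  exact fun h' => h'.symm

lemma vee_fst_le (f : (Fin n → Trop) × (Fin n → Trop)) : (vee f).1 ≤ f.1 := fun i => by
  simp only [vee]; split_ifs <;> simp

lemma vee_snd_le (f : (Fin n → Trop) × (Fin n → Trop)) : (vee f).2 ≤ f.2 := fun i => by
  simp only [vee]; split_ifs <;> simp

lemma vee_of_snd_le_fst {f : (Fin n → Trop) × (Fin n → Trop)} (h : f.2 ≤ f.1) :
    vee f = (f.1, ⊥) := by
  ext i <;> simp [vee, h i]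

lemma vee_sup_inf (f : (Fin n → Trop) × (Fin n → Trop)) :
    ((vee f).1 ⊔ (f.1 ⊓ f.2), (vee f).2 ⊔ (f.1 ⊓ f.2)) = f := by
  ext i <;> simp only [vee, Pi.sup_apply, Pi.inf_apply] <;> split_ifs <;> grind

lemma vee_sup_diag (f : (Fin n → Trop) × (Fin n → Trop)) (c : Fin n → Trop) :
    vee (f.1 ⊔ c, f.2 ⊔ c) = vee (f.1 ⊔ c, f.2) := by
  ext i <;> simp only [vee, Pi.sup_apply] <;> split_ifs <;> grind

lemma vee_sup_vee (f g : (Fin n → Trop) × (Fin n → Trop)) :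
    vee ((vee f).1 ⊔ (vee g).1, (vee f).2 ⊔ (vee g).2) = vee (f.1 ⊔ g.1, f.2 ⊔ g.2) := by
  ext i <;> simp only [vee, Pi.sup_apply] <;> split_ifs <;> grind

lemma vee_tsmul (l : Trop) (f : (Fin n → Trop) × (Fin n → Trop)) :
    vee (tsmul l f.1, tsmul l f.2) = (tsmul l (vee f).1, tsmul l (vee f).2) := by
  rcases eq_or_ne l ⊥ with rfl | hl
  · ext i <;> simp [vee, tsmul]
  · ext i <;> simp [vee, tsmul, WithBot.add_le_add_iff_left hl, WithBot.add_lt_add_iff_left hl]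
      <;> split_ifs <;> simp

lemma vee_congr_snd {P v N : Fin n → Trop} (hv : v ≤ N) (h : ∀ j, P j < N j → v j = N j) :
    vee (P, v) = vee (P, N) := by
  ext j <;> have := hv j <;> have := h j <;> simp only [vee] <;> split_ifs <;> grind

end Vee

namespace IsSignedBendCone

variable {n : ℕ} {R : Set ((Fin n → Trop) × (Fin n → Trop))}

lemma update_snd_bot_mem (hR : IsSignedBendCone R) {x : (Fin n → Trop) × (Fin n → Trop)}
    (hx : x ∈ R) (i : Fin n) : (x.1, update x.2 i ⊥) ∈ R := by
  have key := hR.addI_vee_mem x hx (update ⊥ i (x.2 i), ⊥) (hR.pos_mem _) i (by simp)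
  have hsigned : SignedVecPair (x.1, update x.2 i ⊥) := fun j => by
    rcases eq_or_ne j i with rfl | hj
    · simp
    · simpa [hj] using hR.signed x hx j
  have hbot : update (⊥ : Fin n → Trop) i ⊥ = ⊥ := update_eq_self i ⊥
  rwa [oplusI, update_idem, hbot, sup_bot_eq, sup_bot_eq, vee_of_signedVecPair hsigned] at key

lemma piecewise_bot_snd_mem (hR : IsSignedBendCone R) {x : (Fin n → Trop) × (Fin n → Trop)}
    (hx : x ∈ R) (S : Finset (Fin n)) : (x.1, S.piecewise ⊥ x.2) ∈ R := by
  classical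
  induction S using Finset.induction_on with
  | empty => simpa using hx
  | insert k S _ ih => simpa [Finset.piecewise_insert] using hR.update_snd_bot_mem ih k

lemma update_bot_snd_mem (hR : IsSignedBendCone R) {x : (Fin n → Trop) × (Fin n → Trop)}
    (hx : x ∈ R) (i : Fin n) : (x.1, update ⊥ i (x.2 i)) ∈ R := by
  classical
  simpa using hR.piecewise_bot_snd_mem hx (Finset.univ.erase i)

lemma exists_cancel_fst_of_eq (hR : IsSignedBendCone R) {x u : (Fin n → Trop) × (Fin n → Trop)}
    (hx : x ∈ R) (hu : u ∈ R) {i k : Fin n} {β : Trop} (hki : k ≠ i)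
    (hx2i : x.2 i ≤ β) (hx1i : x.1 i < β) (hu2 : u.2 = update ⊥ i β)
    (hxk : x.1 k = ⊥) (hk : x.2 k = u.1 k) :
    ∃ w ∈ R, w.2 = update ⊥ i β ∧ w.1 k = ⊥ ∧ ∀ j, w.1 j = x.1 j ⊔ u.1 j ∨ w.1 j = ⊥ := by
  have hz := hR.addI_vee_mem x hx u hu k hk
  have hui : u.1 i = ⊥ := (hR.signed u hu i).resolve_right (by simpa [hu2] using hx1i.ne_bot)
  have hzi : (vee (oplusI k x u)).2 i = β := by
    have h1 : (oplusI k x u).1 i = x.1 i := by simp [oplusI, hki.symm, hui]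
    have h2 : (oplusI k x u).2 i = β := by simp [oplusI, hki.symm, hu2, hx2i]
    simp only [vee, h1, h2, if_pos hx1i]
  refine ⟨_, hzi ▸ hR.update_bot_snd_mem hz i, rfl, by simp [vee, oplusI, hxk], fun j => ?_⟩
  rcases eq_or_ne j k with rfl | hjk
  · simp [vee, oplusI, hxk]
  · simp only [vee, oplusI, Pi.sup_apply, update_of_ne hjk]
    split_ifs <;> simp

lemma exists_cancel_fst_on_finset (hR : IsSignedBendCone R) {x : (Fin n → Trop) × (Fin n → Trop)}
    (hx : x ∈ R) {i : Fin n} {β : Trop} (hx2i : x.2 i ≤ β) (hx1i : x.1 i < β)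
    (T : Finset (Fin n)) (hiT : i ∉ T) (hT : ∀ j ∈ T, x.1 j = ⊥) :
    ∀ u ∈ R, u.2 = update ⊥ i β → (∀ j ∈ T, u.1 j = x.2 j ∨ u.1 j = ⊥) →
      ∃ v ∈ R, v.2 = update ⊥ i β ∧ (∀ j ∈ T, v.1 j = ⊥) ∧ v.1 ≤ x.1 ⊔ u.1 := by
  classical
  induction T using Finset.induction_on with
  | empty => exact fun u hu hu2 _ => ⟨u, hu, hu2, by simp, le_sup_right⟩
  | insert k T _ ih =>
    intro u hu hu2 huT
    have hki : k ≠ i := fun h => hiT (h ▸ Finset.mem_insert_self k T)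
    have hxk : x.1 k = ⊥ := hT k (Finset.mem_insert_self k T)
    obtain ⟨w, hw, hw2, hwk, hwu, hwT⟩ : ∃ w ∈ R, w.2 = update ⊥ i β ∧ w.1 k = ⊥ ∧
        w.1 ≤ x.1 ⊔ u.1 ∧ ∀ j ∈ T, w.1 j = x.2 j ∨ w.1 j = ⊥ := by
      rcases huT k (Finset.mem_insert_self k T) with huk | huk
      · obtain ⟨w, hw, hw2, hwk, hwj⟩ :=
          hR.exists_cancel_fst_of_eq hx hu hki hx2i hx1i hu2 hxk huk.symm
        refine ⟨w, hw, hw2, hwk, fun j => ?_, fun j hj => ?_⟩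
        · rcases hwj j with h | h <;> simp [h]
        · rcases hwj j with h | h
          · rw [h, hT j (Finset.mem_insert_of_mem hj), bot_sup_eq]
            exact huT j (Finset.mem_insert_of_mem hj)
          · exact Or.inr h
      · exact ⟨u, hu, hu2, huk, le_sup_right, fun j hj => huT j (Finset.mem_insert_of_mem hj)⟩
    obtain ⟨v, hv, hv2, hvT, hvw⟩ := ih (fun h => hiT (Finset.mem_insert_of_mem h))
      (fun j hj => hT j (Finset.mem_insert_of_mem hj)) w hw hw2 hwT
    refine ⟨v, hv, hv2, ?_, hvw.trans (by simpa using hwu)⟩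
    rintro j hj
    rcases Finset.mem_insert.1 hj with rfl | hj
    · simpa [hxk, hwk] using hvw j
    · exact hvT j hj

end IsSignedBendCone

lemma WithBot.exists_nonpos_add_eq {α : Type*} [AddCommGroup α] [LinearOrder α]
    [IsOrderedAddMonoid α] {a b : WithBot α} (ha : a ≠ ⊥) (hab : a ≤ b) :
    ∃ l ≤ (0 : WithBot α), l + b = a := by
  lift a to α using ha
  lift b to α using ne_bot_of_le_ne_bot WithBot.coe_ne_bot hab
  refine ⟨((a - b : α) : WithBot α), ?_, ?_⟩
  · exact_mod_cast sub_nonpos.2 (WithBot.coe_le_coe.1 hab)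
  · rw [← WithBot.coe_add, sub_add_cancel]

section Transitivity

variable {n : ℕ} {R : Set ((Fin n → Trop) × (Fin n → Trop))} {P M N : Fin n → Trop}

lemma exists_mem_le_snd_eq_of_le (hR : IsSignedBendCone R) (hPM : vee (P, M) ∈ R) {i : Fin n}
    (hPN : P i < N i) (hNM : N i ≤ M i) : ∃ u ∈ R, u.1 ≤ P ∧ u.2 ≤ N ∧ u.2 i = N i := by
  obtain ⟨l, hl, hlM⟩ := WithBot.exists_nonpos_add_eq hPN.ne_bot hNM
  have hxi : (vee (P, M)).2 i = M i := if_pos (hPN.trans_le hNM)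
  have hu := hR.update_bot_snd_mem (hR.smul_mem _ hPM l) i
  refine ⟨_, hu, fun j => ?_, by simp [update_le_iff, tsmul, hxi, hlM], by simp [tsmul, hxi, hlM]⟩
  exact (add_le_of_nonpos_left hl).trans (vee_fst_le (P, M) j)

lemma exists_mem_le_snd_eq_of_lt (hR : IsSignedBendCone R) (hPM : vee (P, M) ∈ R)
    (hMN : vee (M, N) ∈ R) {i : Fin n} (hPN : P i < N i) (hMNi : M i < N i) :
    ∃ u ∈ R, u.1 ≤ P ∧ u.2 ≤ N ∧ u.2 i = N i := by
  classical
  set y := vee (M, N)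
  have hyi : y.2 i = N i := if_pos hMNi
  let T := Finset.univ.filter fun j => P j < M j ∧ N j ≤ M j
  obtain ⟨v, hv, hv2, hvT, hvxy⟩ := hR.exists_cancel_fst_on_finset hPM (β := N i)
    ((vee_snd_le (P, M) i).trans hMNi.le) ((vee_fst_le (P, M) i).trans_lt hPN) T
    (by simp [T, hMNi]) (fun j hj => if_neg (not_le.2 (Finset.mem_filter.1 hj).2.1))
    (y.1, update ⊥ i (N i)) (hyi ▸ hR.update_bot_snd_mem hMN i) rfl
    (fun j hj => Or.inl (by
      obtain ⟨hPM', hNM⟩ := (Finset.mem_filter.1 hj).2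
      exact (if_pos hNM).trans (if_pos hPM').symm))
  refine ⟨v, hv, fun j => ?_, by simp [hv2, update_le_iff], by simp [hv2]⟩
  by_cases hj : j ∈ T
  · simp [hvT j hj]
  · refine (hvxy j).trans (sup_le (vee_fst_le (P, M) j) ?_)
    simp only [T, Finset.mem_filter, Finset.mem_univ, true_and] at hj
    show (if N j ≤ M j then M j else ⊥) ≤ P j
    split_ifs with hNMj
    · exact not_lt.1 fun h => hj ⟨h, hNMj⟩
    · exact bot_le

lemma exists_mem_le_snd_eq (hR : IsSignedBendCone R) (hPM : vee (P, M) ∈ R)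
    (hMN : vee (M, N) ∈ R) {i : Fin n} (hPN : P i < N i) :
    ∃ u ∈ R, u.1 ≤ P ∧ u.2 ≤ N ∧ u.2 i = N i := by
  rcases le_or_gt (N i) (M i) with hNM | hMNi
  · exact exists_mem_le_snd_eq_of_le hR hPM hPN hNM
  · exact exists_mem_le_snd_eq_of_lt hR hPM hMN hPN hMNi

lemma exists_mem_le_snd_eq_on_lt (hR : IsSignedBendCone R)
    (h : ∀ i, P i < N i → ∃ u ∈ R, u.1 ≤ P ∧ u.2 ≤ N ∧ u.2 i = N i) :
    ∃ w ∈ R, w.1 ≤ P ∧ w.2 ≤ N ∧ ∀ i, P i < N i → w.2 i = N i := by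
  classical
  suffices ∀ S : Finset (Fin n),
      ∃ w ∈ R, w.1 ≤ P ∧ w.2 ≤ N ∧ ∀ i ∈ S, P i < N i → w.2 i = N i by
    simpa using this Finset.univ
  intro S
  induction S using Finset.induction_on with
  | empty => exact ⟨(⊥, ⊥), hR.pos_mem ⊥, bot_le, bot_le, by simp⟩
  | insert k S _ ih =>
    obtain ⟨w, hw, hwP, hwN, hwS⟩ := ih
    by_cases hk : P k < N k
    · obtain ⟨u, hu, huP, huN, huk⟩ := h k hk
      refine ⟨_, hR.add_vee_mem w hw u hu, (vee_fst_le _).trans (sup_le hwP huP),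
        (vee_snd_le _).trans (sup_le hwN huN), fun i hi hPNi => ?_⟩
      have hsnd : w.2 i ⊔ u.2 i = N i := by
        rcases Finset.mem_insert.1 hi with rfl | hi
        · rw [huk]; exact sup_eq_right.2 (hwN i)
        · rw [hwS i hi hPNi]; exact sup_eq_left.2 (huN i)
      have hfst : w.1 i ⊔ u.1 i < N i := (sup_le (hwP i) (huP i)).trans_lt hPNi
      simp only [vee, Pi.sup_apply, hsnd, if_pos hfst]
    · refine ⟨w, hw, hwP, hwN, fun i hi hPNi => ?_⟩
      rcases Finset.mem_insert.1 hi with rfl | hi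
      · exact absurd hPNi hk
      · exact hwS i hi hPNi

lemma vee_mem_trans (hR : IsSignedBendCone R) (hPM : vee (P, M) ∈ R)
    (hMN : vee (M, N) ∈ R) : vee (P, N) ∈ R := by
  obtain ⟨w, hw, hwP, hwN, hwPN⟩ :=
    exists_mem_le_snd_eq_on_lt hR fun i => exists_mem_le_snd_eq hR hPM hMN
  have h := hR.add_vee_mem (P, ⊥) (hR.pos_mem P) w hw
  rwa [sup_eq_left.2 hwP, bot_sup_eq, vee_congr_snd hwN hwPN] at h

end Transitivity

def oplusDiagonal {n : ℕ} (R : Set ((Fin n → Trop) × (Fin n → Trop))) :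
    Set ((Fin n → Trop) × (Fin n → Trop)) :=
  {h | ∃ x ∈ R, ∃ c : Fin n → Trop, h = (x.1 ⊔ c, x.2 ⊔ c)}

section OplusDiagonal

variable {n : ℕ} {R : Set ((Fin n → Trop) × (Fin n → Trop))}

lemma oplusDiagonal_eq (hR : IsSignedBendCone R) : oplusDiagonal R = {f | vee f ∈ R} := by
  ext f
  constructor
  · rintro ⟨x, hx, c, rfl⟩
    have h := hR.add_vee_mem x hx (c, ⊥) (hR.pos_mem c)
    rwa [sup_bot_eq, ← vee_sup_diag] at h
  · intro hf
    exact ⟨vee f, hf, f.1 ⊓ f.2, (vee_sup_inf f).symm⟩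

lemma isMonotonePrecongruence_setOf_vee_mem (hR : IsSignedBendCone R) :
    IsMonotonePrecongruence {f | vee f ∈ R} where
  smul_mem f hf l := by
    change vee _ ∈ R
    rw [vee_tsmul]
    exact hR.smul_mem _ hf l
  add_mem f hf g hg := by
    change vee _ ∈ R
    rw [← vee_sup_vee]
    exact hR.add_vee_mem _ hf _ hg
  trans_mem f hf g hg hfg := by
    obtain ⟨P, M⟩ := f
    obtain ⟨M', N⟩ := g
    cases hfg
    exact vee_mem_trans hR hf hg
  monotone_mem f hf := by
    change vee f ∈ R
    rw [vee_of_snd_le_fst hf]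
    exact hR.pos_mem f.1

end OplusDiagonal

/-- If R is a signed bend cone then C = R ⊕ Δⁿ is a monotone pre-congruence. -/
theorem bendCone_oplus_diagonal_precongruence {n : ℕ}
    (R : Set ((Fin n → Trop) × (Fin n → Trop))) (hR : IsSignedBendCone R) :
    IsMonotonePrecongruence
      {h | ∃ x ∈ R, ∃ c : Fin n → Trop, h = (x.1 ⊔ c, x.2 ⊔ c)} := by
  change IsMonotonePrecongruence (oplusDiagonal R)
  rw [oplusDiagonal_eq hR]
  exact isMonotonePrecongruence_setOf_vee_mem hR
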